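/- arXiv:0806.0150 — 2 statements merged into one kernel-verified Lean document; each statement's English description precedes it below -/
import Mathlib

section
/- ∑_{n=1}^∞ (−1)^{n+1} sin(n)/n = ∑_{n=1}^∞ (−1)^{n+1} (sin(n)/n)² = 1/2. -/
open Real Filter Finset Topology


lemma bern2 (x : ℝ) : (Polynomial.map (algebraMap ℚ ℝ) (Polynomial.bernoulli 2)).eval x = x^2 - x + 1/6 := by
  simp [Polynomial.bernoulli, Finset.sum_range_succ, bernoulli'_two, bernoulli_eq_bernoulli'_of_ne_one]
  ring

lemma series2 : Tendsto (fun N : ℕ => ∑ n ∈ Finset.Icc 1 N, (-1 : ℝ) ^ (n + 1) * (Real.sin n / n) ^ 2) atTop (𝓝 ((1:ℝ) / 2)) := by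
  have hpi : (0:ℝ) < π := Real.pi_pos
  have hx2 : (π + 2) / (2 * π) ∈ Set.Icc (0:ℝ) 1 := by
    constructor
    · positivity
    · rw [div_le_one (by positivity)]
      nlinarith [Real.pi_gt_three]
  have h1 := hasSum_one_div_nat_pow_mul_cos one_ne_zero (Set.mem_Icc.mpr ⟨by norm_num, by norm_num⟩ :
      (1/2 : ℝ) ∈ Set.Icc (0:ℝ) 1)
  have h2 := hasSum_one_div_nat_pow_mul_cos one_ne_zero hx2
  rw [show (2*1 : Nat) = 2 from rfl, bern2] at h1 h2
  have h := (h2.sub h1).div_const 2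
  have hval : ((-1 : ℝ) ^ (1 + 1) * (2 * π) ^ (2 * 1) / 2 / (Nat.factorial (2 * 1)) *
        (((π + 2) / (2 * π)) ^ 2 - (π + 2) / (2 * π) + 1 / 6) -
      (-1 : ℝ) ^ (1 + 1) * (2 * π) ^ (2 * 1) / 2 / (Nat.factorial (2 * 1)) *
        ((1/2 : ℝ) ^ 2 - 1/2 + 1 / 6)) / 2 = 1/2 := by
    norm_num [Nat.factorial]
    field_simp
    ring
  rw [hval] at h
  have ht := h.tendsto_sum_nat
  have key : ∀ N : ℕ, ∑ n ∈ Finset.Icc 1 N, (-1 : ℝ) ^ (n + 1) * (Real.sin n / n) ^ 2 =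
      ∑ n ∈ Finset.range (N + 1),
        (1 / (n:ℝ) ^ (2*1) * Real.cos (2 * π * n * ((π + 2) / (2 * π))) -
         1 / (n:ℝ) ^ (2*1) * Real.cos (2 * π * n * (1/2))) / 2 := by
    intro N
    induction N with
    | zero => simp
    | succ N ih =>
      rw [Finset.sum_Icc_succ_top (by omega), Finset.sum_range_succ, ih]
      congr 1
      have hn : ((N:ℝ) + 1) ≠ 0 := by positivity
      have e1 : 2 * π * ((N:ℕ)+1 : ℕ) * ((π + 2) / (2 * π)) = ((N:ℝ)+1) * π + 2 * ((N:ℝ)+1) := by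
        push_cast; field_simp
      have e2 : 2 * π * ((N:ℕ)+1 : ℕ) * (1/2 : ℝ) = ((N:ℝ)+1) * π := by push_cast; ring
      rw [e1, e2]
      have c1 : Real.cos (((N:ℝ)+1) * π + 2 * ((N:ℝ)+1)) = (-1)^(N+1) * Real.cos (2 * ((N:ℝ)+1)) := by
        rw [Real.cos_add]
        have : Real.cos (((N:ℝ)+1) * π) = (-1)^(N+1) := by
          have := Real.cos_nat_mul_pi_sub 0 (N+1)
          simpa using this
        have hs : Real.sin (((N:ℝ)+1) * π) = 0 := by
          have := Real.sin_nat_mul_pi (N+1); push_cast at this ⊢; simpa using this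
        rw [this, hs]; ring
      have c2 : Real.cos (((N:ℝ)+1) * π) = (-1)^(N+1) := by
        have := Real.cos_nat_mul_pi_sub 0 (N+1)
        simpa using this
      rw [c1, c2, Real.cos_two_mul]
      have hsq : Real.sin ((N:ℝ)+1) ^ 2 = 1 - Real.cos ((N:ℝ)+1) ^ 2 := Real.sin_sq _
      push_cast
      rw [div_pow, hsq]
      field_simp
      ring
  have ht' := ht.comp (tendsto_add_atTop_nat 1)
  exact ht'.congr (fun N => (key N).symm)


noncomputable def w : ℂ := Complex.exp ((π - 1 : ℝ) * Complex.I)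

lemma w_re : w.re = -Real.cos 1 := by
  rw [w, Complex.exp_ofReal_mul_I_re, Real.cos_pi_sub]

lemma w_im : w.im = Real.sin 1 := by
  rw [w, Complex.exp_ofReal_mul_I_im, Real.sin_pi_sub]

lemma sin_one_pos : 0 < Real.sin 1 :=
  Real.sin_pos_of_pos_of_lt_pi one_pos (by linarith [Real.pi_gt_three])

lemma one_sub_w_ne : (1 : ℂ) - w ≠ 0 := by
  intro h
  have : ((1:ℂ) - w).im = 0 := by rw [h]; rfl
  simp only [Complex.sub_im, Complex.one_im, w_im, zero_sub, neg_eq_zero] at this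
  exact sin_one_pos.ne' this

lemma w_ne_one : w ≠ 1 := by
  intro h
  apply one_sub_w_ne
  rw [h]; ring

lemma norm_w : ‖w‖ = 1 := Complex.norm_exp_ofReal_mul_I _

lemma geom_bound (n : ℕ) : ‖∑ i ∈ range n, w ^ (i+1)‖ ≤ 2 / ‖(1:ℂ) - w‖ := by
  have : ∑ i ∈ range n, w ^ (i+1) = w * ((w ^ n - 1) / (w - 1)) := by
    rw [← geom_sum_eq w_ne_one, Finset.mul_sum]
    exact Finset.sum_congr rfl fun i _ => by ring
  rw [this, norm_mul, norm_w, one_mul, norm_div]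
  have h1 : ‖w ^ n - 1‖ ≤ 2 := by
    calc ‖w ^ n - 1‖ ≤ ‖w ^ n‖ + ‖(1:ℂ)‖ := norm_sub_le _ _
    _ = 2 := by rw [norm_pow, norm_w, one_pow, norm_one]; norm_num
  have h2 : ‖w - 1‖ = ‖(1:ℂ) - w‖ := norm_sub_rev _ _
  rw [h2]
  have hpos : 0 < ‖(1:ℂ) - w‖ := norm_pos_iff.mpr one_sub_w_ne
  gcongr

noncomputable def g : ℕ → ℂ := fun n => w ^ n / n

lemma exists_limit : ∃ l : ℂ, Tendsto (fun n => ∑ i ∈ range n, g i) atTop (𝓝 l) := by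
  have hanti : Antitone (fun i : ℕ => 1 / ((i:ℝ) + 1)) := by
    intro a b hab
    apply one_div_le_one_div_of_le (by positivity)
    have : (a:ℝ) ≤ b := Nat.cast_le.mpr hab
    linarith
  have hcauchy := hanti.cauchySeq_series_mul_of_tendsto_zero_of_bounded
    tendsto_one_div_add_atTop_nhds_zero_nat (geom_bound)
  obtain ⟨l, hl⟩ := cauchySeq_tendsto_of_complete hcauchy
  refine ⟨l, ?_⟩
  rw [← tendsto_add_atTop_iff_nat 1]
  refine hl.congr fun n => ?_
  rw [Finset.sum_range_succ' g n]
  have hg0 : g 0 = 0 := by simp [g]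
  rw [hg0, add_zero]
  refine Finset.sum_congr rfl fun i _ => ?_
  rw [g, Complex.real_smul]
  push_cast
  field_simp

lemma slit : (1:ℂ) - w ∈ Complex.slitPlane := by
  rw [Complex.mem_slitPlane_iff]
  right
  simp only [Complex.sub_im, Complex.one_im, w_im, zero_sub, neg_ne_zero]
  exact sin_one_pos.ne'

lemma limit_value : ∀ l : ℂ, Tendsto (fun n => ∑ i ∈ range n, g i) atTop (𝓝 l) →
    l = -Complex.log (1 - w) := by
  intro l hl
  have habel := Complex.tendsto_tsum_powerSeries_nhdsWithin_lt hl
  rw [tendsto_map'_iff] at habel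
  -- habel : Tendsto (fun x : ℝ => ∑' n, g n * (x:ℂ)^n) (𝓝[<] 1) (𝓝 l)
  have heq : ∀ᶠ x : ℝ in 𝓝[<] 1, ((fun z => ∑' n, g n * z ^ n) ∘ Complex.ofReal) x
      = -Complex.log (1 - x * w) := by
    have h1 : ∀ᶠ x : ℝ in 𝓝[<] 1, -1 < x :=
      eventually_nhdsWithin_of_eventually_nhds (eventually_gt_nhds (by norm_num))
    have h2 : ∀ᶠ x : ℝ in 𝓝[<] 1, x < 1 := eventually_mem_nhdsWithin
    filter_upwards [h1, h2] with x hx1 hx2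
    have hnorm : ‖(x:ℂ) * w‖ < 1 := by
      rw [norm_mul, norm_w, mul_one, Complex.norm_real, Real.norm_eq_abs, abs_lt]
      exact ⟨hx1, hx2⟩
    have hs := Complex.hasSum_taylorSeries_neg_log hnorm
    rw [Function.comp_apply, ← hs.tsum_eq]
    congr 1
    funext n
    rw [g, mul_pow]
    ring
  have hcont : Tendsto (fun x : ℝ => -Complex.log (1 - x * w)) (𝓝[<] 1) (𝓝 (-Complex.log (1 - w))) := by
    have hc : ContinuousAt (fun x : ℝ => -Complex.log (1 - x * w)) 1 := by
      have hinner : ContinuousAt (fun x : ℝ => (1:ℂ) - x * w) 1 :=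
        (continuous_const.sub (Complex.continuous_ofReal.mul continuous_const)).continuousAt
      have := (continuousAt_clog (by simpa using slit)).comp hinner
      exact this.neg
    have := (hc.continuousWithinAt (s := Set.Iio 1)).tendsto
    simpa using this
  exact tendsto_nhds_unique (habel.congr' heq) hcont

lemma arg_one_sub_w : ((1:ℂ) - w).arg = -(1/2) := by
  have key : (1:ℂ) - w = ((2 * Real.cos (1/2) : ℝ) : ℂ) *
      (Complex.cos ((-(1/2) : ℝ) : ℂ) + Complex.sin ((-(1/2) : ℝ) : ℂ) * Complex.I) := by
    apply Complex.ext
    · simp only [Complex.sub_re, Complex.one_re, w_re, Complex.add_re, Complex.mul_re,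
        Complex.ofReal_re, Complex.ofReal_im, Complex.mul_im, Complex.I_re, Complex.I_im]
      rw [← Complex.ofReal_cos, ← Complex.ofReal_sin]
      simp only [Complex.ofReal_re, Complex.ofReal_im, Complex.add_re, Complex.mul_re,
        Complex.I_re, Complex.I_im, Complex.add_im, Complex.mul_im]
      rw [Real.cos_neg]
      ring_nf
      have : Real.cos (1/2) ^ 2 = 1/2 + Real.cos 1 / 2 := by
        rw [Real.cos_sq]; norm_num
      nlinarith [this]
    · simp only [Complex.sub_im, Complex.one_im, w_im]
      rw [← Complex.ofReal_cos, ← Complex.ofReal_sin]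
      simp only [Complex.add_im, Complex.mul_im, Complex.ofReal_re, Complex.ofReal_im,
        Complex.I_re, Complex.I_im, Complex.add_re, Complex.mul_re]
      rw [Real.sin_neg]
      ring_nf
      have : Real.sin 1 = 2 * Real.sin (1/2) * Real.cos (1/2) := by
        have := Real.sin_two_mul (1/2)
        norm_num at this
        linarith
      linarith [this]
  rw [key]
  apply Complex.arg_mul_cos_add_sin_mul_I
  · have : 0 < Real.cos (1/2) := by
      apply Real.cos_pos_of_mem_Ioo
      constructor <;> [linarith [Real.pi_gt_three]; linarith [Real.pi_gt_three]]
    linarith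
  · constructor <;> [linarith [Real.pi_gt_three]; linarith [Real.pi_pos]]

lemma series1 : Tendsto (fun N : ℕ => ∑ n ∈ Finset.Icc 1 N, (-1 : ℝ) ^ (n + 1) * (Real.sin n / n)) atTop (𝓝 ((1:ℝ) / 2)) := by
  obtain ⟨l, hl⟩ := exists_limit
  have hlv := limit_value l hl
  have him : Tendsto (fun n => (∑ i ∈ range n, g i).im) atTop (𝓝 l.im) :=
    (Complex.continuous_im.continuousAt.tendsto.comp hl)
  have hval : l.im = 1/2 := by
    rw [hlv, Complex.neg_im, Complex.log_im, arg_one_sub_w]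
    norm_num
  rw [hval] at him
  have him' := him.comp (tendsto_add_atTop_nat 1)
  refine him'.congr fun N => ?_
  show (∑ i ∈ range (N + 1), g i).im = _
  induction N with
  | zero => simp [g]
  | succ N ih =>
    rw [Finset.sum_range_succ, Complex.add_im, ih, Finset.sum_Icc_succ_top (by omega)]
    congr 1
    rw [g]
    have hw : w ^ (N+1) = Complex.exp ((((N:ℝ)+1) * (π - 1) : ℝ) * Complex.I) := by
      rw [w, ← Complex.exp_nat_mul]
      congr 1
      push_cast
      ring
    rw [hw]
    have : (Complex.exp ((((N:ℝ)+1) * (π - 1) : ℝ) * Complex.I) / ((N+1 : ℕ) : ℂ)).im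
        = Real.sin (((N:ℝ)+1) * (π - 1)) / ((N:ℝ)+1) := by
      rw [Complex.div_natCast_im, Complex.exp_ofReal_mul_I_im]
      push_cast
      ring
    push_cast at this ⊢
    rw [this]
    have hsin : Real.sin (((N:ℝ)+1) * (π - 1)) = -((-1)^(N+1) * Real.sin ((N:ℝ)+1)) := by
      have := Real.sin_nat_mul_pi_sub ((N:ℝ)+1) (N+1)
      push_cast at this
      rw [← this]
      ring_nf
    rw [hsin]
    ring


theorem stmt12 : (Tendsto (fun N : ℕ => ∑ n ∈ Finset.Icc 1 N, (-1 : ℝ) ^ (n + 1) * (Real.sin n / n)) atTop (𝓝 ((1:ℝ) / 2))) ∧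
    (Tendsto (fun N : ℕ => ∑ n ∈ Finset.Icc 1 N, (-1 : ℝ) ^ (n + 1) * (Real.sin n / n) ^ 2) atTop (𝓝 ((1:ℝ) / 2))) :=
  ⟨series1, series2⟩
end

section
/- For every real x with 0 < x < 2π/5, ∑_{n=1}^∞ sin⁵(nx)/n = 3π/16; and for every real x with 0 ≤ x ≤ π/3, ∑_{n=1}^∞ sin⁶(nx)/n² = 3πx/16. In particular ∑_{n=1}^∞ sin⁵(n)/n = ∑_{n=1}^∞ sin⁶(n)/n² = 3π/16. -/
open Real Filter Finset Topology

lemma sinFive (t : ℝ) : Real.sin t ^ 5 =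
    (10 * Real.sin t - 5 * Real.sin (3 * t) + Real.sin (5 * t)) / 16 := by
  have h3 : Real.sin (3 * t) = 3 * Real.sin t - 4 * Real.sin t ^ 3 := Real.sin_three_mul t
  have h5 : Real.sin (5 * t) = Real.sin (2 * t) * Real.cos (3 * t)
      + Real.cos (2 * t) * Real.sin (3 * t) := by
    rw [show 5 * t = 2 * t + 3 * t by ring, Real.sin_add]
  rw [h5, h3, Real.sin_two_mul, Real.cos_two_mul, Real.cos_three_mul]
  linear_combination (-(Real.sin t * Real.cos t ^ 2) / 2 + Real.sin t ^ 3 - Real.sin t / 2) *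
    Real.sin_sq_add_cos_sq t

lemma sinSixPow (t : ℝ) : Real.sin t ^ 6 =
    (10 - 15 * Real.cos (2 * t) + 6 * Real.cos (4 * t) - Real.cos (6 * t)) / 32 := by
  have e2 : Real.cos (2 * t) = 1 - 2 * Real.sin t ^ 2 := by
    rw [Real.cos_two_mul']; linear_combination Real.sin_sq_add_cos_sq t
  have e4 : Real.cos (4 * t) = 1 - 2 * Real.sin (2 * t) ^ 2 := by
    rw [show 4 * t = 2 * (2 * t) by ring, Real.cos_two_mul']
    linear_combination Real.sin_sq_add_cos_sq (2 * t)
  have e6 : Real.cos (6 * t) = 1 - 2 * Real.sin (3 * t) ^ 2 := by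
    rw [show 6 * t = 2 * (3 * t) by ring, Real.cos_two_mul']
    linear_combination Real.sin_sq_add_cos_sq (3 * t)
  rw [e2, e4, e6, Real.sin_two_mul, Real.sin_three_mul]
  linear_combination (3 / 2 * Real.sin t ^ 2) * Real.sin_sq_add_cos_sq t


lemma sawtooth {θ : ℝ} (h0 : 0 < θ) (h2 : θ < 2 * π) :
    Tendsto (fun N : ℕ => ∑ n ∈ Finset.range N, Real.sin (n * θ) / n) atTop
      (𝓝 ((π - θ) / 2)) := by
  have hpi := Real.pi_pos
  set z : ℂ := Complex.exp (θ * Complex.I) with hzdef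
  have hz1 : z ≠ 1 := by
    rw [hzdef, Ne, Complex.exp_eq_one_iff]
    push_neg
    intro n hn
    have hθ : θ = n * (2 * π) := by
      have h' : (θ : ℂ) * Complex.I = ((n * (2 * π) : ℝ) : ℂ) * Complex.I := by
        rw [hn]; push_cast; ring
      have := mul_right_cancel₀ Complex.I_ne_zero h'
      exact_mod_cast this
    have hn0 : (0 : ℝ) < n := by nlinarith
    have hn1 : (n : ℝ) < 1 := by nlinarith
    have : (0 : ℤ) < n := by exact_mod_cast hn0
    have : (n : ℤ) < 1 := by exact_mod_cast hn1
    omega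
  have hznorm : ‖z‖ = 1 := by
    rw [hzdef, Complex.norm_exp_ofReal_mul_I]
  -- bounded partial sums of z^(i+1)
  have hbd : ∀ n : ℕ, ‖∑ i ∈ Finset.range n, z ^ (i + 1)‖ ≤ 2 / ‖1 - z‖ := by
    intro n
    have h1z : (0:ℝ) < ‖1 - z‖ := by
      rw [norm_pos_iff, sub_ne_zero]; exact fun h => hz1 h.symm
    have : ∑ i ∈ Finset.range n, z ^ (i + 1) = z * ((z ^ n - 1) / (z - 1)) := by
      rw [← geom_sum_eq hz1]
      rw [Finset.mul_sum]
      exact Finset.sum_congr rfl fun i _ => by ring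
    rw [this, norm_mul, hznorm, one_mul, norm_div]
    rw [div_le_div_iff₀ (by rwa [norm_sub_rev] at h1z) h1z]
    have : ‖z ^ n - 1‖ ≤ 2 := by
      calc ‖z ^ n - 1‖ ≤ ‖z ^ n‖ + ‖(1:ℂ)‖ := norm_sub_le _ _
      _ = 2 := by rw [norm_pow, hznorm]; norm_num
    calc ‖z ^ n - 1‖ * ‖1 - z‖ ≤ 2 * ‖1 - z‖ := by
          exact mul_le_mul_of_nonneg_right this (norm_nonneg _)
      _ = 2 * ‖z - 1‖ := by rw [norm_sub_rev]
  -- Cauchy sequence via Dirichlet's test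
  have hanti : Antitone (fun n : ℕ => 1 / (n + 1 : ℝ)) := by
    intro a b hab
    apply one_div_le_one_div_of_le (by positivity)
    exact_mod_cast by omega
  have htend0 : Tendsto (fun n : ℕ => 1 / (n + 1 : ℝ)) atTop (𝓝 0) :=
    tendsto_one_div_add_atTop_nhds_zero_nat
  have hcauchy : CauchySeq fun n => ∑ i ∈ Finset.range n,
      (1 / (i + 1 : ℝ)) • z ^ (i + 1) :=
    hanti.cauchySeq_series_mul_of_tendsto_zero_of_bounded htend0 hbd
  obtain ⟨L, hL⟩ := cauchySeq_tendsto_of_complete hcauchy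
  set g : ℕ → ℂ := fun n => z ^ n / n with hgdef
  have hgsum : Tendsto (fun N => ∑ i ∈ Finset.range N, g i) atTop (𝓝 L) := by
    rw [← tendsto_add_atTop_iff_nat 1]
    apply hL.congr
    intro N
    rw [Finset.sum_range_succ']
    simp only [hgdef, Nat.cast_zero, pow_zero, div_zero, add_zero]
    refine Finset.sum_congr rfl fun i _ => ?_
    rw [Complex.real_smul]
    push_cast
    ring
  -- identify L via Abel's limit theorem
  have habel := Complex.tendsto_tsum_powerSeries_nhdsWithin_lt hgsum
  rw [Filter.tendsto_map'_iff] at habel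
  have h1z : (1 : ℂ) - z ≠ 0 := sub_ne_zero.mpr fun h => hz1 h.symm
  have hre : 0 < (1 - z).re := by
    have hs : 0 < Real.sin (θ / 2) :=
      Real.sin_pos_of_pos_of_lt_pi (by linarith) (by linarith)
    have hc : Real.cos θ = 1 - 2 * Real.sin (θ / 2) ^ 2 := by
      have h' := Real.cos_two_mul' (θ / 2)
      rw [show 2 * (θ / 2) = θ by ring] at h'
      nlinarith [Real.sin_sq_add_cos_sq (θ / 2)]
    have : (1 - z).re = 1 - Real.cos θ := by
      simp [hzdef, Complex.exp_ofReal_mul_I_re]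
    rw [this, hc]; nlinarith
  have hlog : Tendsto (fun x : ℝ => -Complex.log (1 - x * z)) (𝓝[<] (1:ℝ))
      (𝓝 (-Complex.log (1 - z))) := by
    have hcont : ContinuousAt (fun x : ℝ => -Complex.log (1 - x * z)) 1 := by
      have hc1 : ContinuousAt (fun x : ℝ => 1 - (x : ℂ) * z) 1 := by fun_prop
      have hc2 : ContinuousAt Complex.log ((fun x : ℝ => 1 - (x : ℂ) * z) 1) :=
        continuousAt_clog (Or.inl (by simpa using hre))
      exact (ContinuousAt.comp (g := Complex.log) (f := fun x : ℝ => 1 - (x : ℂ) * z) hc2 hc1).neg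
    have := hcont.continuousWithinAt (s := Set.Iio (1:ℝ))
    simpa using this.tendsto
  have heq : (fun x : ℝ => ∑' n, g n * (x : ℂ) ^ n) =ᶠ[𝓝[<] (1:ℝ)]
      (fun x : ℝ => -Complex.log (1 - x * z)) := by
    filter_upwards [Ioo_mem_nhdsLT_of_mem (by norm_num : (1:ℝ) ∈ Set.Ioc (0:ℝ) 1)] with x hx
    have hnorm : ‖(x : ℂ) * z‖ < 1 := by
      rw [norm_mul, hznorm, mul_one, Complex.norm_real, Real.norm_eq_abs,
        abs_of_pos hx.1]
      exact hx.2
    have hsum := Complex.hasSum_taylorSeries_neg_log hnorm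
    rw [← hsum.tsum_eq]
    congr 1
    · funext n
      rw [hgdef]
      simp only [mul_pow]
      ring
  have hL_eq : L = -Complex.log (1 - z) :=
    tendsto_nhds_unique (habel.congr' heq) hlog
  -- take imaginary parts
  have him : Tendsto (fun N => (∑ i ∈ Finset.range N, g i).im) atTop (𝓝 L.im) :=
    (Complex.continuous_im.tendsto L).comp hgsum
  have hLim : L.im = (π - θ) / 2 := by
    rw [hL_eq]
    have harg : Complex.arg (1 - z) = (θ - π) / 2 := by
      have hs : 0 < Real.sin (θ / 2) :=
        Real.sin_pos_of_pos_of_lt_pi (by linarith) (by linarith)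
      have key : (1 : ℂ) - z = ((2 * Real.sin (θ / 2) : ℝ) : ℂ) *
          (Complex.cos ((θ - π) / 2 : ℝ) + Complex.sin ((θ - π) / 2 : ℝ) * Complex.I) := by
        apply Complex.ext
        · simp only [Complex.sub_re, Complex.one_re, hzdef, Complex.exp_ofReal_mul_I_re,
            Complex.mul_re, Complex.ofReal_re, Complex.ofReal_im, Complex.add_re,
            Complex.cos_ofReal_re, Complex.mul_I_re, Complex.sin_ofReal_im,
            Complex.add_im, Complex.mul_I_im, Complex.sin_ofReal_re, Complex.cos_ofReal_im]
          have h1 : Real.cos ((θ - π) / 2) = Real.sin (θ / 2) := by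
            rw [show (θ - π) / 2 = θ / 2 - π / 2 by ring, Real.cos_sub_pi_div_two]
          have h2 : Real.cos θ = 1 - 2 * Real.sin (θ / 2) ^ 2 := by
            have h' := Real.cos_two_mul' (θ / 2)
            rw [show 2 * (θ / 2) = θ by ring] at h'
            nlinarith [Real.sin_sq_add_cos_sq (θ / 2)]
          rw [h1, h2]; simp [Complex.I_re]; ring
        · simp only [Complex.sub_im, Complex.one_im, hzdef, Complex.exp_ofReal_mul_I_im,
            Complex.mul_im, Complex.ofReal_re, Complex.ofReal_im, Complex.add_im,
            Complex.cos_ofReal_im, Complex.mul_I_im, Complex.sin_ofReal_re,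
            Complex.add_re, Complex.cos_ofReal_re, Complex.mul_I_re, Complex.sin_ofReal_im]
          have h1 : Real.sin ((θ - π) / 2) = -Real.cos (θ / 2) := by
            rw [show (θ - π) / 2 = θ / 2 - π / 2 by ring, Real.sin_sub_pi_div_two]
          have h2 : Real.sin θ = 2 * Real.sin (θ / 2) * Real.cos (θ / 2) := by
            rw [show θ = 2 * (θ / 2) by ring, Real.sin_two_mul]; ring_nf
          rw [h1, h2]; simp [Complex.I_im]
      rw [key]
      rw [show (Complex.cos ((θ - π) / 2 : ℝ) + Complex.sin ((θ - π) / 2 : ℝ) * Complex.I)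
        = Complex.cos (((θ - π) / 2 : ℝ) : ℂ) + Complex.sin (((θ - π) / 2 : ℝ) : ℂ) * Complex.I
        from rfl]
      rw [Complex.arg_real_mul _ (by positivity)]
      rw [Complex.arg_cos_add_sin_mul_I ⟨by linarith, by linarith⟩]
    simp [Complex.log_im, harg]
    ring
  rw [← hLim]
  apply him.congr
  intro N
  rw [Complex.im_sum]
  refine Finset.sum_congr rfl fun i _ => ?_
  rw [hgdef]
  simp only []
  rw [show ((i : ℂ)) = ((i : ℝ) : ℂ) by push_cast; rfl]
  rw [Complex.div_ofReal_im]
  congr 1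
  rw [hzdef, ← Complex.exp_nat_mul]
  rw [show (i : ℂ) * (θ * Complex.I) = ((i * θ : ℝ) : ℂ) * Complex.I by push_cast; ring]
  rw [Complex.exp_ofReal_mul_I_im]


lemma tendsto_Icc_of_range {f : ℕ → ℝ} {S : ℝ} (h0 : f 0 = 0)
    (h : Tendsto (fun N : ℕ => ∑ n ∈ Finset.range N, f n) atTop (𝓝 S)) :
    Tendsto (fun N : ℕ => ∑ n ∈ Finset.Icc 1 N, f n) atTop (𝓝 S) := by
  apply (h.comp (tendsto_add_atTop_nat 1)).congr
  intro N
  show ∑ n ∈ Finset.range (N + 1), f n = ∑ n ∈ Finset.Icc 1 N, f n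
  symm
  apply Finset.sum_subset
  · intro x hx
    simp only [Finset.mem_Icc] at hx
    simp only [Finset.mem_range]
    omega
  · intro x hx hx'
    simp only [Finset.mem_range] at hx
    simp only [Finset.mem_Icc] at hx'
    have : x = 0 := by omega
    rw [this, h0]

lemma cosSum {θ : ℝ} (h0 : 0 ≤ θ) (h2 : θ ≤ 2 * π) :
    HasSum (fun n : ℕ => Real.cos (n * θ) / n ^ 2)
      (π ^ 2 / 6 - π * θ / 2 + θ ^ 2 / 4) := by
  have hpi := Real.pi_pos
  have hx : θ / (2 * π) ∈ Set.Icc (0 : ℝ) 1 := by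
    constructor
    · positivity
    · rw [div_le_one (by positivity)]; exact h2
  have h := hasSum_one_div_nat_pow_mul_cos (k := 1) one_ne_zero hx
  have hb : (Polynomial.map (algebraMap ℚ ℝ) (Polynomial.bernoulli 2)).eval (θ / (2 * π))
      = (θ / (2 * π)) ^ 2 - (θ / (2 * π)) + 1 / 6 := by
    have hb2 : (bernoulli 2 : ℚ) = 1 / 6 := by
      rw [bernoulli, bernoulli'_two]; norm_num
    simp [Polynomial.bernoulli, Finset.sum_range_succ, Polynomial.eval_monomial,
      bernoulli_zero, bernoulli_one, hb2]
    ring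
  rw [hb] at h
  have hval : ((-1 : ℝ)) ^ (1 + 1) * (2 * π) ^ (2 * 1) / 2 / ((2 * 1).factorial : ℝ) *
      ((θ / (2 * π)) ^ 2 - (θ / (2 * π)) + 1 / 6) = π ^ 2 / 6 - π * θ / 2 + θ ^ 2 / 4 := by
    rw [show ((2 * 1 : ℕ).factorial : ℝ) = 2 by norm_num [Nat.factorial]]
    field_simp
    ring
  rw [hval] at h
  have hfun : (fun n : ℕ => Real.cos (n * θ) / n ^ 2)
      = (fun n : ℕ => 1 / (n : ℝ) ^ (2 * 1) * Real.cos (2 * π * n * (θ / (2 * π)))) := by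
    funext n
    rw [show 2 * π * n * (θ / (2 * π)) = n * θ by field_simp]
    rw [pow_mul, pow_one]
    ring
  rw [hfun]
  exact h

lemma part1 {x : ℝ} (h0 : 0 < x) (h1 : x < 2 * π / 5) :
    Tendsto (fun N : ℕ => ∑ n ∈ Finset.Icc 1 N, Real.sin (n * x) ^ 5 / n) atTop
      (𝓝 (3 * π / 16)) := by
  have hpi := Real.pi_pos
  apply tendsto_Icc_of_range (by norm_num)
  have t1 := sawtooth h0 (by linarith)
  have t3 := sawtooth (θ := 3 * x) (by linarith) (by linarith)
  have t5 := sawtooth (θ := 5 * x) (by linarith) (by linarith)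
  have h := ((t1.const_mul (10 / 16)).sub (t3.const_mul (5 / 16))).add
    (t5.const_mul (1 / 16))
  rw [show 10 / 16 * ((π - x) / 2) - 5 / 16 * ((π - 3 * x) / 2)
      + 1 / 16 * ((π - 5 * x) / 2) = 3 * π / 16 from by ring] at h
  apply h.congr
  intro N
  rw [Finset.mul_sum, Finset.mul_sum, Finset.mul_sum, ← Finset.sum_sub_distrib,
    ← Finset.sum_add_distrib]
  apply Finset.sum_congr rfl
  intro n _
  rw [show (n : ℝ) * (3 * x) = 3 * (n * x) by ring,
    show (n : ℝ) * (5 * x) = 5 * (n * x) by ring, sinFive]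
  ring

lemma part2 {x : ℝ} (h0 : 0 ≤ x) (h1 : x ≤ π / 3) :
    Tendsto (fun N : ℕ => ∑ n ∈ Finset.Icc 1 N, Real.sin (n * x) ^ 6 / n ^ 2) atTop
      (𝓝 (3 * π * x / 16)) := by
  have hpi := Real.pi_pos
  apply tendsto_Icc_of_range (by norm_num)
  have c0 := (cosSum (θ := 0) le_rfl (by positivity)).tendsto_sum_nat
  have c2 := (cosSum (θ := 2 * x) (by positivity) (by linarith)).tendsto_sum_nat
  have c4 := (cosSum (θ := 4 * x) (by positivity) (by linarith)).tendsto_sum_nat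
  have c6 := (cosSum (θ := 6 * x) (by positivity) (by linarith)).tendsto_sum_nat
  have h := ((c0.const_mul (10 / 32)).sub (c2.const_mul (15 / 32))).add
    ((c4.const_mul (6 / 32)).sub (c6.const_mul (1 / 32)))
  rw [show 10 / 32 * (π ^ 2 / 6 - π * 0 / 2 + 0 ^ 2 / 4)
      - 15 / 32 * (π ^ 2 / 6 - π * (2 * x) / 2 + (2 * x) ^ 2 / 4)
      + (6 / 32 * (π ^ 2 / 6 - π * (4 * x) / 2 + (4 * x) ^ 2 / 4)
      - 1 / 32 * (π ^ 2 / 6 - π * (6 * x) / 2 + (6 * x) ^ 2 / 4))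
      = 3 * π * x / 16 from by ring] at h
  apply h.congr
  intro N
  rw [Finset.mul_sum, Finset.mul_sum, Finset.mul_sum, Finset.mul_sum,
    ← Finset.sum_sub_distrib, ← Finset.sum_sub_distrib, ← Finset.sum_add_distrib]
  apply Finset.sum_congr rfl
  intro n _
  rw [show (n : ℝ) * (2 * x) = 2 * (n * x) by ring,
    show (n : ℝ) * (4 * x) = 4 * (n * x) by ring,
    show (n : ℝ) * (6 * x) = 6 * (n * x) by ring,
    mul_zero, Real.cos_zero, sinSixPow]
  ring

theorem stmt19 :
    (∀ x : ℝ, 0 < x → x < 2 * π / 5 → Tendsto (fun N : ℕ => ∑ n ∈ Finset.Icc 1 N, Real.sin (n * x) ^ 5 / n) atTop (𝓝 (3 * π / 16))) ∧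
    (∀ x : ℝ, 0 ≤ x → x ≤ π / 3 → Tendsto (fun N : ℕ => ∑ n ∈ Finset.Icc 1 N, Real.sin (n * x) ^ 6 / n ^ 2) atTop (𝓝 (3 * π * x / 16))) ∧
    (Tendsto (fun N : ℕ => ∑ n ∈ Finset.Icc 1 N, Real.sin n ^ 5 / n) atTop (𝓝 (3 * π / 16))) ∧
    (Tendsto (fun N : ℕ => ∑ n ∈ Finset.Icc 1 N, Real.sin n ^ 6 / n ^ 2) atTop (𝓝 (3 * π / 16))) := by
  have hpi := Real.pi_gt_three
  refine ⟨fun x hx1 hx2 => part1 hx1 hx2, fun x hx1 hx2 => part2 hx1 hx2, ?_, ?_⟩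
  · have := part1 (x := 1) one_pos (by linarith)
    simpa using this
  · have := part2 (x := 1) zero_le_one (by linarith)
    simpa using this
end
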